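/- (Sublinear cycle–convergence of restarted GMRES for normal matrices.) Let A be an n×n complex normal invertible matrix and let 1 ≤ m ≤ n−1. Let r₀, r₁, …, r_q ∈ ℂⁿ be a sequence of nonzero vectors such that for each k = 1, …, q the vector r_k is a GMRES(m) residual of A from r_{k−1}. Then for every k = 1, …, q−1, ‖r_k‖ / ‖r_{k−1}‖ ≤ ‖r_{k+1}‖ / ‖r_k‖ (equivalently, ‖r_k‖² ≤ ‖r_{k−1}‖ · ‖r_{k+1}‖). -/

import Mathlib

/-!
A GMRES(m) residual `x = p(A) u` is the point of least norm in `u + span {A u, …, Aᵐ u}`, so it is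
orthogonal to `Aʲ u` for `1 ≤ j ≤ m`, i.e. `⟪x, q(A) u⟫ = q(0) ⟪x, u⟫` whenever `deg q ≤ m`.
If the next residual is `y = p'(A) x`, this gives
`‖x‖² = ⟪x, u⟫ = ⟪x, p'(A) u⟫ = ⟪p'(A)ᴴ x, u⟫ ≤ ‖p'(A)ᴴ x‖ ‖u‖`,
and `‖p'(A)ᴴ x‖ = ‖p'(A) x‖ = ‖y‖` because `p'(A)` is normal along with `A`.
-/

open Polynomial Matrix

/-- The Euclidean (ℓ²) norm of a vector in ℂⁿ. -/
noncomputable def euclNorm {n : ℕ} (v : Fin n → ℂ) : ℝ :=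
  ‖(WithLp.equiv 2 (Fin n → ℂ)).symm v‖

/-- `s` is a GMRES(m) residual of `A` from `r`: there is a polynomial `p` of degree at most `m`
with `p 0 = 1` such that `s = p(A) r` and `‖s‖ ≤ ‖q(A) r‖` for all admissible `q`. -/
def IsGMRESResidual {n : ℕ} (m : ℕ) (A : Matrix (Fin n) (Fin n) ℂ)
    (r s : Fin n → ℂ) : Prop :=
  ∃ p : ℂ[X], p.natDegree ≤ m ∧ p.eval 0 = 1 ∧ s = (aeval A p).mulVec r ∧
    ∀ q : ℂ[X], q.natDegree ≤ m → q.eval 0 = 1 →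
      euclNorm s ≤ euclNorm ((aeval A q).mulVec r)

/-- The Krylov matrix `K(A, r) = [r, Ar, …, Aᵐ r]`, an `n × (m+1)` matrix. -/
noncomputable def krylov {n : ℕ} (m : ℕ) (A : Matrix (Fin n) (Fin n) ℂ) (r : Fin n → ℂ) :
    Matrix (Fin n) (Fin (m + 1)) ℂ :=
  Matrix.of fun i j => (A ^ (j : ℕ)).mulVec r i

section LineMinimizer

variable {𝕜 E : Type*} [RCLike 𝕜] [NormedAddCommGroup E] [InnerProductSpace 𝕜 E]

theorem inner_eq_zero_of_forall_norm_le_norm_add_smul {y v : E}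
    (h : ∀ t : 𝕜, ‖y‖ ≤ ‖y + t • v‖) : inner 𝕜 y v = 0 := by
  have hmin : ‖y - 0‖ = ⨅ w : 𝕜 ∙ v, ‖y - w‖ := by
    refine le_antisymm (le_ciInf fun ⟨w, hw⟩ => ?_) ?_
    · obtain ⟨t, rfl⟩ := Submodule.mem_span_singleton.1 hw
      simpa [sub_eq_add_neg, ← neg_smul] using h (-t)
    · simpa using ciInf_le (f := fun w : 𝕜 ∙ v => ‖y - w‖)
        ⟨0, Set.forall_mem_range.2 fun _ => norm_nonneg _⟩ 0
  simpa using ((𝕜 ∙ v).norm_eq_iInf_iff_inner_eq_zero (zero_mem _)).1 hmin v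
    (Submodule.mem_span_singleton_self v)

end LineMinimizer

theorem IsStarNormal.aeval {R A : Type*} [CommSemiring R] [StarRing R] [Semiring A] [StarRing A]
    [Algebra R A] [StarModule R A] (a : A) [IsStarNormal a] (p : R[X]) :
    IsStarNormal (Polynomial.aeval a p) := by
  have hle : Algebra.adjoin R {a} ≤ (StarAlgebra.adjoin R {a}).toSubalgebra :=
    Algebra.adjoin_le (StarAlgebra.subset_adjoin R {a})
  have hp : Polynomial.aeval a p ∈ StarAlgebra.adjoin R {a} := hle (aeval_mem_adjoin_singleton R a)
  exact ⟨congrArg Subtype.val (mul_comm (⟨_, star_mem hp⟩ : StarAlgebra.adjoin R {a}) ⟨_, hp⟩)⟩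

section MinimalResidual

variable {E : Type*} [NormedAddCommGroup E] [InnerProductSpace ℂ E]

def IsMinResidual (m : ℕ) (T : E →L[ℂ] E) (u x : E) : Prop :=
  ∃ p : ℂ[X], p.natDegree ≤ m ∧ p.eval 0 = 1 ∧ x = aeval T p u ∧
    ∀ q : ℂ[X], q.natDegree ≤ m → q.eval 0 = 1 → ‖x‖ ≤ ‖aeval T q u‖

variable {m : ℕ} {T : E →L[ℂ] E} {u x : E}

theorem IsMinResidual.inner_aeval_apply (hx : IsMinResidual m T u x) {q : ℂ[X]}
    (hq : q.natDegree ≤ m) : inner ℂ x (aeval T q u) = q.eval 0 * inner ℂ x u := by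
  obtain ⟨p, hp, hp0, rfl, hmin⟩ := hx
  set q₀ := q - C (q.eval 0)
  have hq₀ : q₀.natDegree ≤ m := (natDegree_sub_le _ _).trans (by simp [hq])
  have horth : inner ℂ (aeval T p u) (aeval T q₀ u) = 0 := by
    refine inner_eq_zero_of_forall_norm_le_norm_add_smul fun t => ?_
    have := hmin (p + C t * q₀) ?_ ?_
    · simpa [Algebra.algebraMap_eq_smul_one] using this
    · exact (natDegree_add_le _ _).trans (max_le hp ((natDegree_C_mul_le _ _).trans hq₀))
    · simp [q₀, hp0]
  have hq_split : aeval T q u = aeval T q₀ u + q.eval 0 • u := by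
    simp [q₀, Algebra.algebraMap_eq_smul_one]
  rw [hq_split, inner_add_right, horth, inner_smul_right, zero_add]

theorem IsMinResidual.norm_sq_le_mul_norm_aeval [CompleteSpace E] [IsStarNormal T]
    (hx : IsMinResidual m T u x) {p : ℂ[X]} (hp : p.natDegree ≤ m) (hp0 : p.eval 0 = 1) :
    ‖x‖ ^ 2 ≤ ‖u‖ * ‖aeval T p x‖ := by
  set B := aeval T p
  have hxx : inner ℂ x x = inner ℂ (B.adjoint x) u := by
    obtain ⟨p₁, hp₁, hp₁0, hx₁, -⟩ := id hx
    rw [ContinuousLinearMap.adjoint_inner_left]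
    calc inner ℂ x x = inner ℂ x (aeval T p₁ u) := by rw [← hx₁]
      _ = inner ℂ x (B u) := by rw [hx.inner_aeval_apply hp₁, hx.inner_aeval_apply hp, hp₁0, hp0]
  have hB : ‖B.adjoint x‖ = ‖B x‖ :=
    (ContinuousLinearMap.isStarNormal_iff_norm_eq_adjoint.1 (IsStarNormal.aeval T p) x).symm
  calc ‖x‖ ^ 2 = ‖inner ℂ x x‖ := by rw [inner_self_eq_norm_sq_to_K]; simp
    _ ≤ ‖B.adjoint x‖ * ‖u‖ := hxx ▸ norm_inner_le_norm _ _
    _ = ‖u‖ * ‖B x‖ := by rw [hB, mul_comm]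

end MinimalResidual

theorem euclNorm_pos {n : ℕ} {v : Fin n → ℂ} (hv : v ≠ 0) : 0 < euclNorm v :=
  norm_pos_iff.2 fun h => hv (congrArg WithLp.ofLp h)

theorem IsGMRESResidual.isMinResidual_toEuclideanCLM {n m : ℕ} {A : Matrix (Fin n) (Fin n) ℂ}
    {r s : Fin n → ℂ} (h : IsGMRESResidual m A r s) :
    IsMinResidual m (toEuclideanCLM (𝕜 := ℂ) A) (WithLp.toLp 2 r) (WithLp.toLp 2 s) := by
  obtain ⟨p, hp, hp0, hs, hmin⟩ := h
  refine ⟨p, hp, hp0, ?_, fun q hq hq0 => ?_⟩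
  · rw [aeval_algHom_apply, toEuclideanCLM_toLp, hs]
  · rw [aeval_algHom_apply, toEuclideanCLM_toLp]
    exact hmin q hq hq0

theorem gmres_cycle_convergence_sublinear_general {n : ℕ} (m q : ℕ)
    (A : Matrix (Fin n) (Fin n) ℂ) (hnormal : A * Aᴴ = Aᴴ * A)
    (r : ℕ → Fin n → ℂ) (hr : ∀ k ≤ q, r k ≠ 0)
    (hres : ∀ k < q, IsGMRESResidual m A (r k) (r (k + 1))) :
    ∀ k, 1 ≤ k → k < q →
      euclNorm (r k) / euclNorm (r (k - 1)) ≤ euclNorm (r (k + 1)) / euclNorm (r k) := by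
  rintro k hk hkq
  obtain ⟨j, rfl⟩ : ∃ j, k = j + 1 := ⟨k - 1, by omega⟩
  have : IsStarNormal A := ⟨hnormal.symm⟩
  obtain ⟨p, hp, hp0, hnext, -⟩ := hres (j + 1) hkq
  have key : euclNorm (r (j + 1)) ^ 2 ≤ euclNorm (r j) * euclNorm (r (j + 1 + 1)) := by
    have := (hres j (by omega)).isMinResidual_toEuclideanCLM.norm_sq_le_mul_norm_aeval hp hp0
    rwa [aeval_algHom_apply, toEuclideanCLM_toLp, ← hnext] at this
  have hprev := euclNorm_pos (hr j (by omega))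
  have hcur := euclNorm_pos (hr (j + 1) (by omega))
  rw [Nat.add_sub_cancel, div_le_div_iff₀ hprev hcur, ← sq]
  linarith

/-- Sublinear cycle–convergence of restarted GMRES for normal matrices: the residual-norm
reduction in one cycle cannot be better than in the previous cycle. -/
theorem gmres_cycle_convergence_sublinear {n : ℕ} (m q : ℕ) (hm : 1 ≤ m) (hmn : m ≤ n - 1)
    (A : Matrix (Fin n) (Fin n) ℂ) (hnormal : A * Aᴴ = Aᴴ * A) (hA : IsUnit A)
    (r : ℕ → Fin n → ℂ) (hr : ∀ k ≤ q, r k ≠ 0)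
    (hres : ∀ k < q, IsGMRESResidual m A (r k) (r (k + 1))) :
    ∀ k, 1 ≤ k → k < q →
      euclNorm (r k) / euclNorm (r (k - 1)) ≤ euclNorm (r (k + 1)) / euclNorm (r k) :=
  gmres_cycle_convergence_sublinear_general m q A hnormal r hr hres
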